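/- arXiv:1202.0093 — 2 statements merged into one kernel-verified Lean document; each statement's English description precedes it below -/
import Mathlib

section
/- For every x > 1 the derivative of the backward auxiliary function satisfies φ←'(x) > κ, and for every x with 0 < x < 1 the derivative of the forward auxiliary function satisfies φ→'(x) > κ. -/
open Real Set Filter Topology

/-- κ = √γ / α with α = (γ-1)/2. -/
noncomputable def kappa (γ : ℝ) : ℝ := Real.sqrt γ / ((γ - 1) / 2)

/-- The shock branch x ↦ √((1 - x^{-1/α})(x^{γ/α} - 1)), α = (γ-1)/2. -/
noncomputable def shockPart (γ : ℝ) (x : ℝ) : ℝ :=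
  Real.sqrt ((1 - x ^ (-(1 : ℝ) / ((γ - 1) / 2))) * (x ^ (γ / ((γ - 1) / 2)) - 1))

/-- Backward auxiliary function φ← : rarefaction branch κ(x-1) for x ≤ 1,
    shock branch for x ≥ 1 (they agree, with value 0, at x = 1). -/
noncomputable def phiB (γ : ℝ) (x : ℝ) : ℝ :=
  if x ≤ 1 then kappa γ * (x - 1) else shockPart γ x

/-- Forward auxiliary function φ→ : shock branch -√(...) for x ≤ 1,
    rarefaction branch κ(x-1) for x ≥ 1 (they agree, with value 0, at x = 1). -/
noncomputable def phiF (γ : ℝ) (x : ℝ) : ℝ :=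
  if x < 1 then -shockPart γ x else kappa γ * (x - 1)

/-!
With `p = 1/α = 2/(γ-1)` the shock branch is `√G` for `G x = (1 - x^(-p)) * (x^(p+2) - 1)`, and
`κ² = p(p+2)`. The product rule writes `G' = u + v` with `u = p x^(-p-1) (x^(p+2) - 1)` and
`v = (p+2) x^(p+1) (1 - x^(-p))`, and the powers of `x` cancel in `u v = p(p+2) G`. Away from
`x = 1`, `u` and `v` have the same sign, so by AM-GM `|G'| = |u| + |v| > 2√(uv) = 2κ√G`,
i.e. `|(√G)'| > κ`. Strictness is `u ≠ v`, which reduces to the strict Bernoulli inequality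
`(p+2) x^(2p+2) > (2p+2) x^(p+2) - p`.
-/

theorem lt_add_div_two_sqrt {u v κ s : ℝ} (hu : 0 < u) (hv : 0 < v) (huv : u ≠ v)
    (h : u * v = κ ^ 2 * s) : κ < (u + v) / (2 * √s) := by
  have hs : 0 < s := pos_of_mul_pos_right (h ▸ mul_pos hu hv) (sq_nonneg κ)
  have hamgm : √(u * v) < (u + v) / 2 := by
    rw [sqrt_lt' (by positivity)]
    nlinarith [sq_pos_of_ne_zero (sub_ne_zero.2 huv)]
  rw [lt_div_iff₀ (by positivity)]
  calc κ * (2 * √s) ≤ |κ| * (2 * √s) := by gcongr; exact le_abs_self κ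
    _ = 2 * √(u * v) := by rw [h, sqrt_mul (sq_nonneg κ), sqrt_sq_eq_abs]; ring
    _ < u + v := by linarith

noncomputable def shockRadicand (p x : ℝ) : ℝ := (1 - x ^ (-p)) * (x ^ (p + 2) - 1)

section ShockRadicand

variable {p x : ℝ}

theorem hasDerivAt_shockRadicand (hx : 0 < x) :
    HasDerivAt (shockRadicand p)
      (p * x ^ (-p - 1) * (x ^ (p + 2) - 1) + (p + 2) * x ^ (p + 1) * (1 - x ^ (-p))) x := by
  have h₁ := ((hasDerivAt_rpow_const (p := -p) (Or.inl hx.ne')).const_sub 1)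
  have h₂ := ((hasDerivAt_rpow_const (p := p + 2) (Or.inl hx.ne')).sub_const 1)
  rw [show p + 2 - 1 = p + 1 by ring] at h₂
  exact (h₁.mul h₂).congr_deriv (by ring)

theorem shockRadicand_deriv_terms_mul (hx : 0 < x) :
    p * x ^ (-p - 1) * (x ^ (p + 2) - 1) * ((p + 2) * x ^ (p + 1) * (1 - x ^ (-p)))
      = p * (p + 2) * shockRadicand p x := by
  have hcancel : x ^ (-p - 1) * x ^ (p + 1) = 1 := by
    rw [← rpow_add hx, show -p - 1 + (p + 1) = 0 by ring, rpow_zero]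
  unfold shockRadicand
  linear_combination (p * (p + 2) * (x ^ (p + 2) - 1) * (1 - x ^ (-p))) * hcancel

theorem mul_rpow_sub_lt_mul_rpow (hp : 0 < p) (hx : 0 < x) (hx1 : x ≠ 1) :
    (2 * p + 2) * x ^ (p + 2) - p < (p + 2) * x ^ (2 * p + 2) := by
  have hs : x ^ (p + 2) - 1 ≠ 0 :=
    sub_ne_zero.2 fun h =>
      hx1 ((rpow_left_inj hx.le zero_le_one (by linarith)).1 (h.trans (one_rpow _).symm))
  have hbern := one_add_mul_self_lt_rpow_one_add
    (by linarith [rpow_pos_of_pos hx (p + 2)]) hs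
    (show 1 < (2 * p + 2) / (p + 2) by rw [one_lt_div (by linarith)]; linarith)
  rw [add_sub_cancel, ← rpow_mul hx.le, mul_div_cancel₀ _ (by linarith)] at hbern
  have := mul_lt_mul_of_pos_left hbern (show 0 < p + 2 by linarith)
  rw [mul_add, ← mul_assoc, mul_div_cancel₀ _ (by linarith)] at this
  linarith

theorem shockRadicand_deriv_terms_lt (hp : 0 < p) (hx : 0 < x) (hx1 : x ≠ 1) :
    p * x ^ (-p - 1) * (x ^ (p + 2) - 1) < (p + 2) * x ^ (p + 1) * (1 - x ^ (-p)) := by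
  have e₁ : x ^ (-p - 1) * x ^ (2 * p + 2) = x ^ (p + 1) := by
    rw [← rpow_add hx]; ring_nf
  have e₂ : x ^ (-p - 1) * x ^ (p + 2) = x := by
    rw [← rpow_add hx, show -p - 1 + (p + 2) = 1 by ring, rpow_one]
  have e₃ : x ^ (p + 1) * x ^ (-p) = x := by
    rw [← rpow_add hx, show p + 1 + -p = 1 by ring, rpow_one]
  have hdiff : (p + 2) * x ^ (p + 1) * (1 - x ^ (-p)) - p * x ^ (-p - 1) * (x ^ (p + 2) - 1)
      = x ^ (-p - 1) * ((p + 2) * x ^ (2 * p + 2) - ((2 * p + 2) * x ^ (p + 2) - p)) := by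
    linear_combination (p + 2) * (e₂ - e₁ - e₃)
  have := mul_pos (rpow_pos_of_pos hx (-p - 1)) (sub_pos.2 (mul_rpow_sub_lt_mul_rpow hp hx hx1))
  linarith

theorem sqrt_lt_deriv_sqrt_shockRadicand (hp : 0 < p) (hx : 1 < x) :
    √(p * (p + 2)) < deriv (fun y => √(shockRadicand p y)) x := by
  have hx0 : 0 < x := one_pos.trans hx
  have hu : 0 < p * x ^ (-p - 1) * (x ^ (p + 2) - 1) :=
    mul_pos (mul_pos hp (rpow_pos_of_pos hx0 _)) (sub_pos.2 (one_lt_rpow hx (by linarith)))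
  have hv : 0 < (p + 2) * x ^ (p + 1) * (1 - x ^ (-p)) :=
    mul_pos (mul_pos (by linarith) (rpow_pos_of_pos hx0 _))
      (sub_pos.2 (rpow_lt_one_of_one_lt_of_neg hx (by linarith)))
  have hprod := shockRadicand_deriv_terms_mul (p := p) hx0
  have hG : 0 < shockRadicand p x :=
    pos_of_mul_pos_right (hprod ▸ mul_pos hu hv) (by positivity)
  rw [((hasDerivAt_shockRadicand hx0).sqrt hG.ne').deriv]
  refine lt_add_div_two_sqrt hu hv (shockRadicand_deriv_terms_lt hp hx0 hx.ne').ne ?_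
  rwa [sq_sqrt (by positivity)]

theorem sqrt_lt_deriv_neg_sqrt_shockRadicand (hp : 0 < p) (hx0 : 0 < x) (hx : x < 1) :
    √(p * (p + 2)) < deriv (fun y => -√(shockRadicand p y)) x := by
  have hu : 0 < -(p * x ^ (-p - 1) * (x ^ (p + 2) - 1)) :=
    neg_pos.2 <| mul_neg_of_pos_of_neg (mul_pos hp (rpow_pos_of_pos hx0 _))
      (sub_neg.2 (rpow_lt_one hx0.le hx (by linarith)))
  have hv : 0 < -((p + 2) * x ^ (p + 1) * (1 - x ^ (-p))) :=
    neg_pos.2 <| mul_neg_of_pos_of_neg (mul_pos (by linarith) (rpow_pos_of_pos hx0 _))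
      (sub_neg.2 (one_lt_rpow_of_pos_of_lt_one_of_neg hx0 hx (by linarith)))
  have hprod := shockRadicand_deriv_terms_mul (p := p) hx0
  rw [← neg_mul_neg] at hprod
  have hG : 0 < shockRadicand p x :=
    pos_of_mul_pos_right (hprod ▸ mul_pos hu hv) (by positivity)
  rw [((hasDerivAt_shockRadicand hx0).sqrt hG.ne').fun_neg.deriv, ← neg_div, neg_add]
  refine lt_add_div_two_sqrt hu hv (neg_lt_neg (shockRadicand_deriv_terms_lt hp hx0 hx.ne)).ne' ?_
  rwa [sq_sqrt (by positivity)]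

end ShockRadicand

theorem kappa_eq_sqrt {γ : ℝ} (hγ : 1 < γ) :
    kappa γ = √(2 / (γ - 1) * (2 / (γ - 1) + 2)) := by
  have hγ₁ : γ - 1 ≠ 0 := by linarith
  rw [eq_comm, sqrt_eq_iff_eq_sq (by positivity) (by unfold kappa; positivity), kappa, div_pow,
    sq_sqrt (by linarith)]
  field_simp
  ring

theorem shockPart_eq_sqrt_shockRadicand {γ : ℝ} (hγ : 1 < γ) :
    shockPart γ = fun x => √(shockRadicand (2 / (γ - 1)) x) := by
  have hγ₁ : γ - 1 ≠ 0 := by linarith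
  have e₁ : -(1 : ℝ) / ((γ - 1) / 2) = -(2 / (γ - 1)) := by field_simp
  have e₂ : γ / ((γ - 1) / 2) = 2 / (γ - 1) + 2 := by field_simp; ring
  funext x
  rw [shockPart, shockRadicand, e₁, e₂]

/-- φ←'(x) > κ for x > 1, and φ→'(x) > κ for 0 < x < 1. -/
theorem deriv_phi_gt_kappa (γ : ℝ) (hγ : 1 < γ) :
    (∀ x : ℝ, 1 < x → kappa γ < deriv (phiB γ) x) ∧
    (∀ x : ℝ, 0 < x → x < 1 → kappa γ < deriv (phiF γ) x) := by
  have hp : 0 < 2 / (γ - 1) := div_pos two_pos (by linarith)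
  rw [kappa_eq_sqrt hγ]
  refine ⟨fun x hx => ?_, fun x hx0 hx => ?_⟩
  · have hphi : phiB γ =ᶠ[𝓝 x] fun y => √(shockRadicand (2 / (γ - 1)) y) := by
      filter_upwards [Ioi_mem_nhds hx] with y hy
      rw [phiB, if_neg (not_le.2 hy), shockPart_eq_sqrt_shockRadicand hγ]
    rw [hphi.deriv_eq]
    exact sqrt_lt_deriv_sqrt_shockRadicand hp hx
  · have hphi : phiF γ =ᶠ[𝓝 x] fun y => -√(shockRadicand (2 / (γ - 1)) y) := by
      filter_upwards [Iio_mem_nhds hx] with y hy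
      rw [phiF, if_pos (mem_Iio.1 hy), shockPart_eq_sqrt_shockRadicand hγ]
    rw [hphi.deriv_eq]
    exact sqrt_lt_deriv_neg_sqrt_shockRadicand hp hx0 hx
end

section
/- Let b > 0 and f > 0 satisfy φ←(b) + κb > (φ→(f) - κ)/f. Then there exists a unique B > 0 such that φ←(B) + bf·φ←(B/(bf)) + φ→(f) - f·φ←(b) = 0. (This is the vacuum-free solvability of the interaction Riemann problem for a head-on interaction in the isentropic p-system, where b and f are the ξ-ratios of the incoming backward and forward waves and B is the ξ-ratio of the outgoing backward wave.) -/
open Real Set Filter Topology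

/-!
Write `G B` for the left-hand side. Since `φ←` is continuous and strictly increasing on `(0, ∞)`,
so is `G`; it extends continuously to `B = 0`, where both `φ←` terms equal `-κ`, and there
`G 0 = φ→(f) - κ - f (φ←(b) + κ b) < 0` is the no-vacuum hypothesis. The shock branch of `φ←`
is unbounded, so `G → ∞`, and the intermediate value theorem gives the zero, which is unique
by monotonicity.
-/

lemma kappa_pos {γ : ℝ} (hγ : 1 < γ) : 0 < kappa γ :=
  div_pos (Real.sqrt_pos.2 (by linarith)) (by linarith)

lemma shockPart_one (γ : ℝ) : shockPart γ 1 = 0 := by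
  simp [shockPart]

lemma strictMonoOn_shockPart {γ : ℝ} (hγ : 1 < γ) : StrictMonoOn (shockPart γ) (Ici 1) := by
  intro x (hx : 1 ≤ x) y (hy : 1 ≤ y) hxy
  have hα : 0 < (γ - 1) / 2 := by linarith
  have hneg : -(1 : ℝ) / ((γ - 1) / 2) < 0 := div_neg_of_neg_of_pos (by norm_num) hα
  have hpos : 0 < γ / ((γ - 1) / 2) := div_pos (by linarith) hα
  have hdecay : y ^ (-(1 : ℝ) / ((γ - 1) / 2)) ≤ x ^ (-(1 : ℝ) / ((γ - 1) / 2)) :=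
    Real.rpow_le_rpow_of_nonpos (by linarith) hxy.le hneg.le
  have hdecay_lt : y ^ (-(1 : ℝ) / ((γ - 1) / 2)) < 1 :=
    Real.rpow_lt_one_of_one_lt_of_neg (hx.trans_lt hxy) hneg
  have hdecay_le : x ^ (-(1 : ℝ) / ((γ - 1) / 2)) ≤ 1 :=
    Real.rpow_le_one_of_one_le_of_nonpos hx hneg.le
  have hgrow : x ^ (γ / ((γ - 1) / 2)) < y ^ (γ / ((γ - 1) / 2)) :=
    Real.rpow_lt_rpow (by linarith) hxy hpos
  have hgrow_ge : 1 ≤ x ^ (γ / ((γ - 1) / 2)) := Real.one_le_rpow hx hpos.le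
  exact Real.sqrt_lt_sqrt (mul_nonneg (by linarith) (by linarith))
    (mul_lt_mul' (by linarith) (by linarith) (by linarith) (by linarith))

lemma continuousOn_shockPart (γ : ℝ) : ContinuousOn (shockPart γ) (Ioi 0) := by
  intro x (hx : 0 < x)
  unfold shockPart
  fun_prop (disch := exact Or.inl hx.ne')

lemma tendsto_shockPart_atTop {γ : ℝ} (hγ : 1 < γ) : Tendsto (shockPart γ) atTop atTop := by
  have hα : 0 < (γ - 1) / 2 := by linarith
  have hdecay : Tendsto (fun x : ℝ => 1 - x ^ (-(1 : ℝ) / ((γ - 1) / 2))) atTop (𝓝 1) := by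
    simpa [neg_div] using tendsto_const_nhds.sub (tendsto_rpow_neg_atTop (one_div_pos.2 hα))
  have hgrow : Tendsto (fun x : ℝ => x ^ (γ / ((γ - 1) / 2)) - 1) atTop atTop :=
    tendsto_atTop_add_const_right _ _ (tendsto_rpow_atTop (div_pos (by linarith) hα))
  exact Real.tendsto_sqrt_atTop.comp (hdecay.pos_mul_atTop one_pos hgrow)

lemma phiB_zero (γ : ℝ) : phiB γ 0 = -kappa γ := by
  simp [phiB]

lemma strictMonoOn_phiB {γ : ℝ} (hγ : 1 < γ) : StrictMonoOn (phiB γ) (Ioi 0) := by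
  have hrarefaction : StrictMonoOn (phiB γ) (Ioc 0 1) := fun x hx y hy hxy => by
    simp only [phiB, if_pos hx.2, if_pos hy.2]
    exact mul_lt_mul_of_pos_left (by linarith) (kappa_pos hγ)
  have hshock : StrictMonoOn (phiB γ) (Ici 1) := by
    refine (strictMonoOn_shockPart hγ).congr fun x (hx : 1 ≤ x) => ?_
    rcases hx.eq_or_lt with rfl | hx
    · simp [phiB, shockPart_one]
    · simp [phiB, hx.not_ge]
  simpa using hrarefaction.union hshock ⟨⟨one_pos, le_rfl⟩, fun x hx => hx.2⟩ isLeast_Ici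

@[fun_prop]
lemma continuous_phiB (γ : ℝ) : Continuous (phiB γ) :=
  continuous_if_le continuous_id continuous_const (by fun_prop)
    ((continuousOn_shockPart γ).mono fun x (hx : 1 ≤ x) => one_pos.trans_le hx)
    fun x hx => by simp [hx, shockPart_one]

lemma tendsto_phiB_atTop {γ : ℝ} (hγ : 1 < γ) : Tendsto (phiB γ) atTop atTop :=
  (tendsto_shockPart_atTop hγ).congr' <| (eventually_gt_atTop 1).mono fun x hx => by
    simp [phiB, hx.not_ge]

lemma existsUnique_eq_of_strictMonoOn_Ioi {g : ℝ → ℝ} {a c : ℝ} (hmono : StrictMonoOn g (Ioi a))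
    (hcont : ContinuousOn g (Ici a)) (hlt : g a < c) (htop : Tendsto g atTop atTop) :
    ∃! x, a < x ∧ g x = c := by
  obtain ⟨b, hab, hcb⟩ := ((eventually_ge_atTop a).and (htop.eventually_gt_atTop c)).exists
  obtain ⟨x, hx, hgx⟩ :=
    intermediate_value_Ioc hab (hcont.mono Icc_subset_Ici_self) ⟨hlt, hcb.le⟩
  exact ⟨x, ⟨hx.1, hgx⟩, fun y hy => hmono.injOn hy.1 hx.1 (hy.2.trans hgx.symm)⟩

/-- vacuum-free solvability of the head-on interaction Riemann problem. -/
theorem headon_interaction_solvable (γ : ℝ) (hγ : 1 < γ)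
    (b f : ℝ) (hb : 0 < b) (hf : 0 < f)
    (hnovac : (phiF γ f - kappa γ) / f < phiB γ b + kappa γ * b) :
    ∃! B : ℝ, 0 < B ∧
      phiB γ B + b * f * phiB γ (B / (b * f)) + phiF γ f - f * phiB γ b = 0 := by
  have hbf : 0 < b * f := mul_pos hb hf
  have hscaled : StrictMonoOn (fun B => b * f * phiB γ (B / (b * f))) (Ioi 0) :=
    (strictMono_mul_left_of_pos hbf).comp_strictMonoOn <|
      (strictMonoOn_phiB hγ).comp (fun x _ y _ hxy => div_lt_div_of_pos_right hxy hbf)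
        fun x (hx : 0 < x) => div_pos hx hbf
  refine existsUnique_eq_of_strictMonoOn_Ioi
    ((((strictMonoOn_phiB hγ).add hscaled).add_const _).add_const _)
    (Continuous.continuousOn (by fun_prop)) ?_ ?_
  · rw [div_lt_iff₀ hf] at hnovac
    simp only [phiB_zero, zero_div]
    linarith
  · exact tendsto_atTop_add_const_right _ _ <| tendsto_atTop_add_const_right _ _ <|
      (tendsto_phiB_atTop hγ).atTop_add_atTop <|
        ((tendsto_phiB_atTop hγ).comp (tendsto_id.atTop_div_const hbf)).const_mul_atTop hbf
end
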